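/- Let μ₁ and μ₂ be probability measures on measurable spaces X₁ and X₂ respectively, and let m₁, m₂ be σ-finite measures on X₁, X₂. If the product measure μ₁ ⊗ μ₂ is singular with respect to m₁ ⊗ m₂, then μ₁ is singular with respect to m₁ or μ₂ is singular with respect to m₂. -/
import Mathlib


open MeasureTheory

/-- If a product of probability measures is singular with respect to a product of
σ-finite measures, then one of the factors is singular. -/
theorem singular_factor_of_prod_singular
    {X₁ X₂ : Type*} [MeasurableSpace X₁] [MeasurableSpace X₂]
    (μ₁ : Measure X₁) (μ₂ : Measure X₂) [IsProbabilityMeasure μ₁] [IsProbabilityMeasure μ₂]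
    (m₁ : Measure X₁) (m₂ : Measure X₂) [SigmaFinite m₁] [SigmaFinite m₂]
    (h : (μ₁.prod μ₂) ⟂ₘ (m₁.prod m₂)) :
    μ₁ ⟂ₘ m₁ ∨ μ₂ ⟂ₘ m₂ := by
  by_contra hc
  push_neg at hc
  obtain ⟨h1, h2⟩ := hc
  set a₁ := m₁.withDensity (μ₁.rnDeriv m₁) with ha₁
  set a₂ := m₂.withDensity (μ₂.rnDeriv m₂) with ha₂
  have hac₁ : a₁ ≪ m₁ := withDensity_absolutelyContinuous _ _
  have hac₂ : a₂ ≪ m₂ := withDensity_absolutelyContinuous _ _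
  have hle₁ : a₁ ≤ μ₁ := Measure.withDensity_rnDeriv_le _ _
  have hle₂ : a₂ ≤ μ₂ := Measure.withDensity_rnDeriv_le _ _
  have hne₁ : a₁ ≠ 0 := fun h0 => h1 ((Measure.withDensity_rnDeriv_eq_zero _ _).mp h0)
  have hne₂ : a₂ ≠ 0 := fun h0 => h2 ((Measure.withDensity_rnDeriv_eq_zero _ _).mp h0)
  have : IsFiniteMeasure a₁ := isFiniteMeasure_of_le μ₁ hle₁
  have : IsFiniteMeasure a₂ := isFiniteMeasure_of_le μ₂ hle₂
  have hprodle : a₁.prod a₂ ≤ μ₁.prod μ₂ := by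
    refine Measure.le_intro fun s hs _ => ?_
    rw [Measure.prod_apply hs, Measure.prod_apply hs]
    exact lintegral_mono' hle₁ fun x => hle₂ _
  have hprodac : a₁.prod a₂ ≪ m₁.prod m₂ := Measure.AbsolutelyContinuous.prod hac₁ hac₂
  have hsing : a₁.prod a₂ ⟂ₘ m₁.prod m₂ := h.mono hprodle le_rfl
  have hzero : a₁.prod a₂ = 0 :=
    Measure.eq_zero_of_absolutelyContinuous_of_mutuallySingular hprodac hsing
  have huniv : (a₁.prod a₂) Set.univ = 0 := by rw [hzero]; simp
  rw [← Set.univ_prod_univ, Measure.prod_prod] at huniv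
  rcases mul_eq_zero.mp huniv with h0 | h0
  · exact hne₁ (Measure.measure_univ_eq_zero.mp h0)
  · exact hne₂ (Measure.measure_univ_eq_zero.mp h0)
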